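/- arXiv:2512.00266 — 4 statements merged into one kernel-verified Lean document; each statement's English description precedes it below -/
import Mathlib

section
/- Let H be a real inner product space and let f : H → ℝ be a convex differentiable function whose gradient is β-Lipschitz for some β > 0 (i.e., ‖∇f(θ₁) − ∇f(θ₂)‖ ≤ β‖θ₁ − θ₂‖ for all θ₁, θ₂ ∈ H). Then for every step size α with 0 < α ≤ 2/β, the gradient descent update map G_α(θ) = θ − α∇f(θ) is nonexpansive: for all θ₁, θ₂ ∈ H, ‖G_α(θ₁) − G_α(θ₂)‖ ≤ ‖θ₁ − θ₂‖. -/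
open scoped RealInnerProductSpace

section GDAux
variable {H : Type*} [NormedAddCommGroup H] [InnerProductSpace ℝ H]
  {f : H → ℝ} {g : H → H} {β : ℝ}

lemma gd_line_hasDerivAt (hdiff : ∀ θ, HasFDerivAt f ((innerSL ℝ) (g θ)) θ)
    (x v : H) (t : ℝ) :
    HasDerivAt (fun s : ℝ => f (x + s • v)) ⟪g (x + t • v), v⟫ t := by
  have h1 : HasDerivAt (fun s : ℝ => x + s • v) v t := by
    simpa using ((hasDerivAt_id t).smul_const v).const_add x
  have h2 := (hdiff (x + t • v)).comp_hasDerivAt t h1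
  simp at h2
  exact h2

lemma gd_grad_ineq (hconv : ConvexOn ℝ Set.univ f)
    (hdiff : ∀ θ, HasFDerivAt f ((innerSL ℝ) (g θ)) θ) (x y : H) :
    f x + ⟪g x, y - x⟫ ≤ f y := by
  set φ : ℝ → ℝ := fun s => f (x + s • (y - x)) with hφ
  have hφconv : ConvexOn ℝ Set.univ φ := by
    have := hconv.comp_affineMap (AffineMap.lineMap x y)
    simp only [Set.preimage_univ] at this
    suffices h : φ = f ∘ ⇑(AffineMap.lineMap x y) by rw [h]; exact this
    funext s
    simp only [φ, Function.comp, AffineMap.lineMap_apply_module]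
    congr 1
    module
  have hd : HasDerivAt φ ⟪g x, y - x⟫ 0 := by
    simpa using gd_line_hasDerivAt hdiff x (y - x) 0
  have := hφconv.le_slope_of_hasDerivAt (Set.mem_univ 0) (Set.mem_univ 1)
    one_pos hd
  simp [slope_def_field, φ] at this
  linarith

lemma gd_descent (hβ : 0 < β)
    (hdiff : ∀ θ, HasFDerivAt f ((innerSL ℝ) (g θ)) θ)
    (hlip : ∀ θ₁ θ₂, ‖g θ₁ - g θ₂‖ ≤ β * ‖θ₁ - θ₂‖) (x y : H) :
    f y ≤ f x + ⟪g x, y - x⟫ + β / 2 * ‖y - x‖ ^ 2 := by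
  set v := y - x with hv
  set ψ : ℝ → ℝ := fun t => f (x + t • v) - t * ⟪g x, v⟫ - β * t ^ 2 / 2 * ‖v‖ ^ 2 with hψ
  have hd : ∀ t : ℝ, HasDerivAt ψ (⟪g (x + t • v), v⟫ - ⟪g x, v⟫ - β * t * ‖v‖ ^ 2) t := by
    intro t
    have h1 := gd_line_hasDerivAt hdiff x v t
    have h2 : HasDerivAt (fun t : ℝ => t * ⟪g x, v⟫) ⟪g x, v⟫ t := by
      simpa using (hasDerivAt_id t).mul_const ⟪g x, v⟫
    have h3 : HasDerivAt (fun t : ℝ => β * t ^ 2 / 2 * ‖v‖ ^ 2) (β * t * ‖v‖ ^ 2) t := by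
      have : HasDerivAt (fun t : ℝ => t ^ 2) (2 * t) t := by
        simpa using hasDerivAt_pow 2 t
      have := ((this.const_mul β).div_const 2).mul_const (‖v‖ ^ 2)
      refine this.congr_deriv ?_
      ring
    exact (h1.sub h2).sub h3
  have hanti : AntitoneOn ψ (Set.Icc 0 1) := by
    apply antitoneOn_of_deriv_nonpos (convex_Icc 0 1)
    · exact fun t _ => ((hd t).continuousAt).continuousWithinAt
    · intro t ht
      exact ((hd t).differentiableAt).differentiableWithinAt
    · intro t ht
      rw [interior_Icc] at ht
      rw [(hd t).deriv]
      have hin : ⟪g (x + t • v) - g x, v⟫ ≤ ‖g (x + t • v) - g x‖ * ‖v‖ :=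
        real_inner_le_norm _ _
      have hl : ‖g (x + t • v) - g x‖ ≤ β * (t * ‖v‖) := by
        have := hlip (x + t • v) x
        simpa [norm_smul, abs_of_pos ht.1, mul_assoc] using this
      have : ⟪g (x + t • v), v⟫ - ⟪g x, v⟫ ≤ β * t * ‖v‖ ^ 2 := by
        rw [← inner_sub_left]
        calc ⟪g (x + t • v) - g x, v⟫ ≤ ‖g (x + t • v) - g x‖ * ‖v‖ := hin
        _ ≤ β * (t * ‖v‖) * ‖v‖ := mul_le_mul_of_nonneg_right hl (norm_nonneg _)
        _ = β * t * ‖v‖ ^ 2 := by ring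
      linarith
  have h01 := hanti (Set.mem_Icc.mpr ⟨le_refl 0, zero_le_one⟩)
    (Set.mem_Icc.mpr ⟨zero_le_one, le_refl 1⟩) zero_le_one
  simp [ψ] at h01
  have hxy : x + v = y := by simp [hv]
  rw [hxy] at h01
  linarith

/-- Strengthened gradient inequality for convex β-smooth functions. -/
lemma gd_coco_half (hβ : 0 < β) (hconv : ConvexOn ℝ Set.univ f)
    (hdiff : ∀ θ, HasFDerivAt f ((innerSL ℝ) (g θ)) θ)
    (hlip : ∀ θ₁ θ₂, ‖g θ₁ - g θ₂‖ ≤ β * ‖θ₁ - θ₂‖) (x y : H) :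
    f x + ⟪g x, y - x⟫ + 1 / (2 * β) * ‖g y - g x‖ ^ 2 ≤ f y := by
  set z := y - (1 / β) • (g y - g x) with hz
  have h1 : f x + ⟪g x, z - x⟫ ≤ f z := gd_grad_ineq hconv hdiff x z
  have h2 : f z ≤ f y + ⟪g y, z - y⟫ + β / 2 * ‖z - y‖ ^ 2 :=
    gd_descent hβ hdiff hlip y z
  have hzy : z - y = -((1 / β) • (g y - g x)) := by rw [hz]; abel
  have hzx : z - x = (y - x) - (1 / β) • (g y - g x) := by rw [hz]; abel
  have e1 : ⟪g y, z - y⟫ = -(1 / β) * ⟪g y, g y - g x⟫ := by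
    rw [hzy, inner_neg_right, real_inner_smul_right]; ring
  have e2 : ‖z - y‖ ^ 2 = (1 / β) ^ 2 * ‖g y - g x‖ ^ 2 := by
    rw [hzy, norm_neg, norm_smul]
    rw [Real.norm_eq_abs, abs_of_pos (by positivity)]
    ring
  have e3 : ⟪g x, z - x⟫ = ⟪g x, y - x⟫ - (1 / β) * ⟪g x, g y - g x⟫ := by
    rw [hzx, inner_sub_right, real_inner_smul_right]
  have e4 : ⟪g y, g y - g x⟫ - ⟪g x, g y - g x⟫ = ‖g y - g x‖ ^ 2 := by
    rw [← inner_sub_left, real_inner_self_eq_norm_sq]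
  have hβ' : β ≠ 0 := ne_of_gt hβ
  rw [e1, e2] at h2
  rw [e3] at h1
  have key : f x + ⟪g x, y - x⟫ - (1 / β) * ⟪g x, g y - g x⟫ ≤
      f y + (-(1 / β) * ⟪g y, g y - g x⟫) + β / 2 * ((1 / β) ^ 2 * ‖g y - g x‖ ^ 2) := by
    linarith
  have hb : β / 2 * ((1 / β) ^ 2 * ‖g y - g x‖ ^ 2) = 1 / (2 * β) * ‖g y - g x‖ ^ 2 := by
    field_simp
  rw [hb] at key
  have : (1 / β) * (⟪g y, g y - g x⟫ - ⟪g x, g y - g x⟫) = (1 / β) * ‖g y - g x‖ ^ 2 := by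
    rw [e4]
  have hfin : (1 / β) * ‖g y - g x‖ ^ 2 - 1 / (2 * β) * ‖g y - g x‖ ^ 2
      = 1 / (2 * β) * ‖g y - g x‖ ^ 2 := by field_simp; ring
  nlinarith [key, this, hfin]

/-- Cocoercivity (Baillon–Haddad). -/
lemma gd_cocoercive (hβ : 0 < β) (hconv : ConvexOn ℝ Set.univ f)
    (hdiff : ∀ θ, HasFDerivAt f ((innerSL ℝ) (g θ)) θ)
    (hlip : ∀ θ₁ θ₂, ‖g θ₁ - g θ₂‖ ≤ β * ‖θ₁ - θ₂‖) (x y : H) :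
    (1 / β) * ‖g x - g y‖ ^ 2 ≤ ⟪g x - g y, x - y⟫ := by
  have h1 := gd_coco_half hβ hconv hdiff hlip x y
  have h2 := gd_coco_half hβ hconv hdiff hlip y x
  have e1 : ⟪g x, y - x⟫ + ⟪g y, x - y⟫ = -⟪g x - g y, x - y⟫ := by
    have : y - x = -(x - y) := by abel
    rw [this, inner_neg_right, inner_sub_left]
    ring
  have e2 : ‖g y - g x‖ = ‖g x - g y‖ := by rw [← norm_neg]; congr 1; abel
  rw [e2] at h1
  have : 2 * (1 / (2 * β)) * ‖g x - g y‖ ^ 2 = (1 / β) * ‖g x - g y‖ ^ 2 := by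
    field_simp
  nlinarith [h1, h2, e1]
end GDAux

/-- **Nonexpansiveness of the gradient descent update (convex case).**
If `f : H → ℝ` is convex and differentiable on a real inner product space with
gradient `g` that is `β`-Lipschitz, then for every step size `0 < α ≤ 2/β` the
update map `G_α(θ) = θ - α • g θ` is nonexpansive. -/
theorem gradient_descent_nonexpansive
    {H : Type*} [NormedAddCommGroup H] [InnerProductSpace ℝ H]
    (f : H → ℝ) (g : H → H) (β : ℝ) (hβ : 0 < β)
    (hconv : ConvexOn ℝ Set.univ f)
    (hdiff : ∀ θ, HasFDerivAt f ((innerSL ℝ) (g θ)) θ)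
    (hlip : ∀ θ₁ θ₂, ‖g θ₁ - g θ₂‖ ≤ β * ‖θ₁ - θ₂‖)
    (α : ℝ) (hα0 : 0 < α) (hα : α ≤ 2 / β) :
    ∀ θ₁ θ₂ : H, ‖(θ₁ - α • g θ₁) - (θ₂ - α • g θ₂)‖ ≤ ‖θ₁ - θ₂‖ := by
  intro θ₁ θ₂
  have hco := gd_cocoercive hβ hconv hdiff hlip θ₁ θ₂
  have hrw : (θ₁ - α • g θ₁) - (θ₂ - α • g θ₂) = (θ₁ - θ₂) - α • (g θ₁ - g θ₂) := by
    rw [smul_sub]; abel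
  have hsq : ‖(θ₁ - θ₂) - α • (g θ₁ - g θ₂)‖ ^ 2 ≤ ‖θ₁ - θ₂‖ ^ 2 := by
    rw [norm_sub_sq_real]
    rw [real_inner_smul_right, norm_smul, Real.norm_eq_abs, abs_of_pos hα0,
      mul_pow]
    have h1 : α ^ 2 * ‖g θ₁ - g θ₂‖ ^ 2 ≤ 2 * α * (1 / β * ‖g θ₁ - g θ₂‖ ^ 2) := by
      have : α ^ 2 ≤ 2 * α * (1 / β) := by
        rw [pow_two]
        have := mul_le_mul_of_nonneg_left hα (le_of_lt hα0)
        calc α * α ≤ α * (2 / β) := this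
        _ = 2 * α * (1 / β) := by ring
      nlinarith [sq_nonneg ‖g θ₁ - g θ₂‖]
    have hsym : ⟪θ₁ - θ₂, g θ₁ - g θ₂⟫ = ⟪g θ₁ - g θ₂, θ₁ - θ₂⟫ :=
      real_inner_comm _ _
    have h2 := mul_le_mul_of_nonneg_left hco (by positivity : (0:ℝ) ≤ 2 * α)
    rw [hsym]
    linarith
  rw [hrw]
  exact (pow_le_pow_iff_left₀ (norm_nonneg _) (norm_nonneg _) two_ne_zero).mp hsq
end

section
/- Let H be a real inner product space and let f : H → ℝ be a convex differentiable function whose gradient is β-Lipschitz for some β > 0. Then the gradient of f is (1/β)-co-coercive: for all x, y ∈ H, ⟨∇f(x) − ∇f(y), x − y⟩ ≥ (1/β)‖∇f(x) − ∇f(y)‖². -/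
open scoped RealInnerProductSpace

section Aux
variable {H : Type*} [NormedAddCommGroup H] [InnerProductSpace ℝ H]

-- derivative of f along the segment
lemma seg_deriv (f : H → ℝ) (g : H → H)
    (hdiff : ∀ θ, HasFDerivAt f ((innerSL ℝ) (g θ)) θ) (x y : H) (t : ℝ) :
    HasDerivAt (fun s : ℝ => f (x + s • (y - x))) ⟪g (x + t • (y - x)), y - x⟫ t := by
  have hc : HasDerivAt (fun s : ℝ => x + s • (y - x)) (y - x) t := by
    simpa using ((hasDerivAt_id t).smul_const (y - x)).const_add x
  exact (hdiff (x + t • (y - x))).comp_hasDerivAt t hc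

lemma first_order (f : H → ℝ) (g : H → H)
    (hconv : ConvexOn ℝ Set.univ f)
    (hdiff : ∀ θ, HasFDerivAt f ((innerSL ℝ) (g θ)) θ) (x y : H) :
    f x + ⟪g x, y - x⟫ ≤ f y := by
  set φ : ℝ → ℝ := fun s => f (x + s • (y - x)) with hφ
  have hd : HasDerivAt φ ⟪g x, y - x⟫ 0 := by
    simpa using seg_deriv f g hdiff x y 0
  have hslope : Filter.Tendsto (slope φ 0) (nhdsWithin 0 (Set.Ioi 0)) (nhds ⟪g x, y - x⟫) :=
    ((hasDerivAt_iff_tendsto_slope.mp hd).mono_left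
      (nhdsWithin_mono _ (fun t ht => ne_of_gt ht)))
  have hbound : ∀ᶠ t in nhdsWithin (0:ℝ) (Set.Ioi 0), slope φ 0 t ≤ f y - f x := by
    filter_upwards [Ioo_mem_nhdsGT_of_mem (Set.left_mem_Ico.mpr one_pos)] with t ht
    have h01 : (0:ℝ) ≤ 1 - t := by linarith [ht.2]
    have hx' : x + t • (y - x) = (1 - t) • x + t • y := by
      simp [smul_sub, sub_smul]; abel
    have := hconv.2 (Set.mem_univ x) (Set.mem_univ y) h01 (le_of_lt ht.1) (by ring)
    rw [slope_def_field]
    have hφt : φ t ≤ (1 - t) * f x + t * f y := by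
      rw [hφ]; simp only []; rw [hx']; simpa [smul_eq_mul] using this
    have hφ0 : φ 0 = f x := by simp [hφ]
    rw [sub_zero, hφ0, div_le_iff₀ ht.1]
    nlinarith [ht.1]
  have := le_of_tendsto hslope hbound
  linarith

lemma descent (f : H → ℝ) (g : H → H) (β : ℝ) (hβ : 0 < β)
    (hdiff : ∀ θ, HasFDerivAt f ((innerSL ℝ) (g θ)) θ)
    (hlip : ∀ θ₁ θ₂, ‖g θ₁ - g θ₂‖ ≤ β * ‖θ₁ - θ₂‖) (x y : H) :
    f y ≤ f x + ⟪g x, y - x⟫ + β / 2 * ‖y - x‖ ^ 2 := by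
  have hgc : Continuous g := by
    refine (LipschitzWith.of_dist_le_mul (K := ⟨β, hβ.le⟩) ?_).continuous
    intro a b; rw [dist_eq_norm, dist_eq_norm]; exact hlip a b
  set c : ℝ → H := fun s => x + s • (y - x) with hc
  have hcc : Continuous c := by continuity
  have hcont : Continuous fun t => ⟪g (c t), y - x⟫ :=
    (continuous_inner.comp ((hgc.comp hcc).prodMk continuous_const))
  have hint : IntervalIntegrable (fun t => ⟪g (c t), y - x⟫) MeasureTheory.volume 0 1 :=
    hcont.intervalIntegrable 0 1
  have hftc : f y - f x = ∫ t in (0:ℝ)..1, ⟪g (c t), y - x⟫ := by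
    have := intervalIntegral.integral_eq_sub_of_hasDerivAt
      (f := fun s : ℝ => f (c s)) (f' := fun t => ⟪g (c t), y - x⟫)
      (fun t _ => seg_deriv f g hdiff x y t) hint
    simp only [hc] at this ⊢
    rw [this]; simp
  have hmono : (∫ t in (0:ℝ)..1, ⟪g (c t), y - x⟫)
      ≤ ∫ t in (0:ℝ)..1, (⟪g x, y - x⟫ + t * (β * ‖y - x‖ ^ 2)) := by
    refine intervalIntegral.integral_mono_on zero_le_one hint
      (by apply Continuous.intervalIntegrable; continuity) ?_
    intro t ht
    have h1 : ⟪g (c t) - g x, y - x⟫ ≤ ‖g (c t) - g x‖ * ‖y - x‖ :=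
      real_inner_le_norm _ _
    have h2 : ‖g (c t) - g x‖ ≤ β * (t * ‖y - x‖) := by
      have := hlip (c t) x
      have : ‖g (c t) - g x‖ ≤ β * ‖t • (y - x)‖ := by simpa [hc] using this
      simpa [norm_smul, abs_of_nonneg ht.1] using this
    have h3 : ⟪g (c t), y - x⟫ = ⟪g x, y - x⟫ + ⟪g (c t) - g x, y - x⟫ := by
      rw [← inner_add_left, add_sub_cancel]
    have hn : (0:ℝ) ≤ ‖y - x‖ := norm_nonneg _
    nlinarith
  have hval : (∫ t in (0:ℝ)..1, (⟪g x, y - x⟫ + t * (β * ‖y - x‖ ^ 2)))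
      = ⟪g x, y - x⟫ + β / 2 * ‖y - x‖ ^ 2 := by
    rw [intervalIntegral.integral_add (by apply Continuous.intervalIntegrable; continuity)
      (by apply Continuous.intervalIntegrable; continuity)]
    simp [intervalIntegral.integral_mul_const, integral_id]
    ring
  linarith [hftc, hmono, hval.le, hftc.le]

end Aux

section Main
variable {H : Type*} [NormedAddCommGroup H] [InnerProductSpace ℝ H]

lemma key_ineq (f : H → ℝ) (g : H → H) (β : ℝ) (hβ : 0 < β)
    (hconv : ConvexOn ℝ Set.univ f)
    (hdiff : ∀ θ, HasFDerivAt f ((innerSL ℝ) (g θ)) θ)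
    (hlip : ∀ θ₁ θ₂, ‖g θ₁ - g θ₂‖ ≤ β * ‖θ₁ - θ₂‖) (x y : H) :
    f x + ⟪g x, y - x⟫ + 1 / (2 * β) * ‖g x - g y‖ ^ 2 ≤ f y := by
  set φ : H → ℝ := fun z => f z + -⟪g x, z⟫ with hφ
  set g' : H → H := fun z => g z - g x with hg'
  have hdiff' : ∀ θ, HasFDerivAt φ ((innerSL ℝ) (g' θ)) θ := by
    intro θ
    have := (hdiff θ).sub ((innerSL ℝ (g x)).hasFDerivAt)
    rw [hφ, hg']; simp only [map_sub]; simp only [sub_eq_add_neg] at this ⊢; exact this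
  have hlip' : ∀ θ₁ θ₂, ‖g' θ₁ - g' θ₂‖ ≤ β * ‖θ₁ - θ₂‖ := by
    intro θ₁ θ₂; simpa [hg', sub_sub_sub_cancel_right] using hlip θ₁ θ₂
  have hlin : ConvexOn ℝ Set.univ (fun z : H => -⟪g x, z⟫) :=
    ⟨convex_univ, fun a _ b _ p q _ _ _ =>
      le_of_eq (by simp [inner_add_right, inner_smul_right, smul_eq_mul]; ring)⟩
  have hconv' : ConvexOn ℝ Set.univ φ := hconv.add hlin
  set z : H := y - (1 / β) • (g y - g x) with hz
  have h1 : φ x ≤ φ z := by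
    have := first_order φ g' hconv' hdiff' x z
    simpa [hg'] using this
  have h2 : φ z ≤ φ y + ⟪g' y, z - y⟫ + β / 2 * ‖z - y‖ ^ 2 :=
    descent φ g' β hβ hdiff' hlip' y z
  have hzy : z - y = -((1 / β) • (g y - g x)) := by rw [hz]; abel
  have hin : ⟪g' y, z - y⟫ = -(1 / β) * ‖g y - g x‖ ^ 2 := by
    rw [hzy, hg']
    simp [inner_neg_right, real_inner_smul_right, real_inner_self_eq_norm_sq]
  have hnz : ‖z - y‖ ^ 2 = (1 / β) ^ 2 * ‖g y - g x‖ ^ 2 := by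
    rw [hzy, norm_neg, norm_smul, Real.norm_eq_abs,
      abs_of_pos (by positivity : (0:ℝ) < 1 / β)]
    ring
  have hns : ‖g x - g y‖ = ‖g y - g x‖ := norm_sub_rev _ _
  have hxy : ⟪g x, y - x⟫ = ⟪g x, y⟫ - ⟪g x, x⟫ := inner_sub_right _ _ _
  have hβ' : β ≠ 0 := ne_of_gt hβ
  have hφx : φ x = f x - ⟪g x, x⟫ := by simp [hφ, sub_eq_add_neg]
  have hφy : φ y = f y - ⟪g x, y⟫ := by simp [hφ, sub_eq_add_neg]
  rw [hin, hnz] at h2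
  have hcomb := le_trans h1 h2
  rw [hφx, hφy] at hcomb
  rw [hxy, hns]
  have h4 : -(1 / β) * ‖g y - g x‖ ^ 2 + β / 2 * ((1 / β) ^ 2 * ‖g y - g x‖ ^ 2)
      = -(1 / (2 * β)) * ‖g y - g x‖ ^ 2 := by
    field_simp; ring
  linarith [hcomb, h4]

end Main

/-- **Co-coercivity of the gradient of a convex smooth function.**
If `f : H → ℝ` is convex and differentiable on a real inner product space with
gradient `g` that is `β`-Lipschitz (`β > 0`), then `g` is `(1/β)`-co-coercive:
`⟪g x - g y, x - y⟫ ≥ (1/β) ‖g x - g y‖²` for all `x, y`. -/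
theorem gradient_cocoercive
    {H : Type*} [NormedAddCommGroup H] [InnerProductSpace ℝ H]
    (f : H → ℝ) (g : H → H) (β : ℝ) (hβ : 0 < β)
    (hconv : ConvexOn ℝ Set.univ f)
    (hdiff : ∀ θ, HasFDerivAt f ((innerSL ℝ) (g θ)) θ)
    (hlip : ∀ θ₁ θ₂, ‖g θ₁ - g θ₂‖ ≤ β * ‖θ₁ - θ₂‖) :
    ∀ x y : H, (1 / β) * ‖g x - g y‖ ^ 2 ≤ ⟪g x - g y, x - y⟫ := by
  intro x y
  have k1 := key_ineq f g β hβ hconv hdiff hlip x y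
  have k2 := key_ineq f g β hβ hconv hdiff hlip y x
  have e1 : ⟪g x - g y, x - y⟫ = ⟪g x, x - y⟫ - ⟪g y, x - y⟫ := inner_sub_left _ _ _
  have e2 : ⟪g x, x - y⟫ = -⟪g x, y - x⟫ := by
    rw [← inner_neg_right]; congr 1; abel
  have hns : ‖g y - g x‖ = ‖g x - g y‖ := norm_sub_rev _ _
  rw [hns] at k2
  have hβ' : (0:ℝ) < 2 * β := by linarith
  have : 1 / β = 2 * (1 / (2 * β)) := by field_simp
  rw [e1, e2, this]
  linarith
end

section
/- (Gradient correlation in time.) Let H be a real inner product space, T > 0, R > 0, and let g : ℝ → H satisfy the gradient correlation assumption: for all t and δ with t, t+δ ∈ [0,T] and |δ| ≤ R, ⟨g(t), g(t+δ)⟩ ≥ 0. Let k ≥ 1 and let δt₁, …, δt_k ∈ ℝ satisfy |δt_i| ≤ R/3 for all i. Define the temporally averaged map g^time(t) = g(t) + (1/k)·Σ_{i=1}^k g(t + δt_i). Then for every t and δt with |δt| ≤ R/3 such that all of the points t, t+δt, t+δt_i, t+δt+δt_j (for 1 ≤ i, j ≤ k) lie in [0,T], the averaged correlation dominates the pointwise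 correlation: ⟨g(t), g(t+δt)⟩ ≤ ⟨g^time(t), g^time(t+δt)⟩. -/
/-!
Expanding the inner product, the averaged correlation is the pointwise one plus three cross
terms. Each cross term is a nonnegative combination of correlations between times of the form
`t + a` and `t + δ + b` with `|a|, |b|, |δ| ≤ R / 3`, hence at distance at most `R`, so the
assumption makes each of them nonnegative.
-/

open scoped RealInnerProductSpace

section InnerNonneg

variable {H ι : Type*} [NormedAddCommGroup H] [InnerProductSpace ℝ H]

theorem real_inner_le_inner_add_add {x y a b : H} (hxb : 0 ≤ ⟪x, b⟫) (hay : 0 ≤ ⟪a, y⟫)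
    (hab : 0 ≤ ⟪a, b⟫) : ⟪x, y⟫ ≤ ⟪x + a, y + b⟫ := by
  rw [inner_add_left, inner_add_right, inner_add_right]
  linarith

theorem real_inner_smul_sum_nonneg_left {c : ℝ} (hc : 0 ≤ c) {s : Finset ι} {u : ι → H}
    {y : H} (h : ∀ i ∈ s, 0 ≤ ⟪u i, y⟫) : 0 ≤ ⟪c • ∑ i ∈ s, u i, y⟫ := by
  rw [real_inner_smul_left, sum_inner]
  exact mul_nonneg hc (Finset.sum_nonneg h)

theorem real_inner_smul_sum_nonneg_right {c : ℝ} (hc : 0 ≤ c) {s : Finset ι} {x : H}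
    {v : ι → H} (h : ∀ j ∈ s, 0 ≤ ⟪x, v j⟫) : 0 ≤ ⟪x, c • ∑ j ∈ s, v j⟫ := by
  rw [real_inner_smul_right, inner_sum]
  exact mul_nonneg hc (Finset.sum_nonneg h)

end InnerNonneg

theorem inner_shift_nonneg_of_abs_le_third {H : Type*} [NormedAddCommGroup H]
    [InnerProductSpace ℝ H] {T R : ℝ} {g : ℝ → H}
    (hcorr : ∀ t δ : ℝ, t ∈ Set.Icc (0 : ℝ) T → t + δ ∈ Set.Icc (0 : ℝ) T →
      |δ| ≤ R → 0 ≤ ⟪g t, g (t + δ)⟫)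
    {t δ a b : ℝ} (hδ : |δ| ≤ R / 3) (ha : |a| ≤ R / 3) (hb : |b| ≤ R / 3)
    (hta : t + a ∈ Set.Icc (0 : ℝ) T) (htδb : t + δ + b ∈ Set.Icc (0 : ℝ) T) :
    0 ≤ ⟪g (t + a), g (t + δ + b)⟫ := by
  have hdist : |δ + b - a| ≤ R :=
    calc |δ + b - a| ≤ |δ + b| + |a| := abs_sub _ _
      _ ≤ |δ| + |b| + |a| := by gcongr; exact abs_add_le _ _
      _ ≤ R := by linarith
  have hshift : t + a + (δ + b - a) = t + δ + b := by ring
  simpa only [hshift] using hcorr (t + a) (δ + b - a) hta (hshift ▸ htδb) hdist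

theorem gradient_correlation_time_averaging_general
    {H : Type*} [NormedAddCommGroup H] [InnerProductSpace ℝ H]
    (T R : ℝ) (g : ℝ → H)
    (hcorr : ∀ t δ : ℝ, t ∈ Set.Icc (0 : ℝ) T → t + δ ∈ Set.Icc (0 : ℝ) T →
      |δ| ≤ R → 0 ≤ ⟪g t, g (t + δ)⟫)
    (k : ℕ) (δt : Fin k → ℝ) (hδt : ∀ i, |δt i| ≤ R / 3)
    (t δ : ℝ) (hδ : |δ| ≤ R / 3)
    (ht : t ∈ Set.Icc (0 : ℝ) T) (htδ : t + δ ∈ Set.Icc (0 : ℝ) T)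
    (hti : ∀ i, t + δt i ∈ Set.Icc (0 : ℝ) T)
    (htδj : ∀ j, t + δ + δt j ∈ Set.Icc (0 : ℝ) T) :
    ⟪g t, g (t + δ)⟫
      ≤ ⟪g t + (1 / (k : ℝ)) • ∑ i, g (t + δt i),
          g (t + δ) + (1 / (k : ℝ)) • ∑ j, g (t + δ + δt j)⟫ := by
  have hzero : |(0 : ℝ)| ≤ R / 3 := by simpa using (abs_nonneg δ).trans hδ
  have hk : (0 : ℝ) ≤ 1 / (k : ℝ) := by positivity
  have corr := fun {a b : ℝ} =>
    inner_shift_nonneg_of_abs_le_third hcorr (t := t) (a := a) (b := b) hδ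
  apply real_inner_le_inner_add_add
  · refine real_inner_smul_sum_nonneg_right hk fun j _ => ?_
    simpa using corr hzero (hδt j) (by simpa using ht) (htδj j)
  · refine real_inner_smul_sum_nonneg_left hk fun i _ => ?_
    simpa using corr (hδt i) hzero (hti i) (by simpa using htδ)
  · exact real_inner_smul_sum_nonneg_left hk fun i _ =>
      real_inner_smul_sum_nonneg_right hk fun j _ => corr (hδt i) (hδt j) (hti i) (htδj j)

/-- **Gradient correlation in time (Theorem 3.2 / `them:grad_cor_time`).**
Under the gradient correlation assumption (nonnegative inner products of
gradients at times within distance `R` of each other in `[0,T]`), the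
temporally averaged gradient `g^time(t) = g t + (1/k) ∑ᵢ g (t + δtᵢ)` with
perturbations `|δtᵢ| ≤ R/3` has correlation dominating the pointwise one:
`⟪g t, g (t+δ)⟫ ≤ ⟪g^time t, g^time (t+δ)⟫` for `|δ| ≤ R/3`, provided all the
involved time points lie in `[0,T]`. -/
theorem gradient_correlation_time_averaging
    {H : Type*} [NormedAddCommGroup H] [InnerProductSpace ℝ H]
    (T R : ℝ) (hT : 0 < T) (hR : 0 < R) (g : ℝ → H)
    (hcorr : ∀ t δ : ℝ, t ∈ Set.Icc (0 : ℝ) T → t + δ ∈ Set.Icc (0 : ℝ) T →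
      |δ| ≤ R → 0 ≤ ⟪g t, g (t + δ)⟫)
    (k : ℕ) (hk : 1 ≤ k) (δt : Fin k → ℝ) (hδt : ∀ i, |δt i| ≤ R / 3)
    (t δ : ℝ) (hδ : |δ| ≤ R / 3)
    (ht : t ∈ Set.Icc (0 : ℝ) T) (htδ : t + δ ∈ Set.Icc (0 : ℝ) T)
    (hti : ∀ i, t + δt i ∈ Set.Icc (0 : ℝ) T)
    (htδj : ∀ j, t + δ + δt j ∈ Set.Icc (0 : ℝ) T) :
    ⟪g t, g (t + δ)⟫
      ≤ ⟪g t + (1 / (k : ℝ)) • ∑ i, g (t + δt i),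
          g (t + δ) + (1 / (k : ℝ)) • ∑ j, g (t + δ + δt j)⟫ :=
  gradient_correlation_time_averaging_general T R g hcorr k δt hδt t δ hδ ht htδ hti htδj
end

section
/- (Multiscale decomposition identity for the nonlinear Klein–Gordon equation.) Fix d ≥ 1, ε > 0, and λ ∈ ℝ. Let z : ℝ^d × ℝ → ℂ and r : ℝ^d × ℝ → ℝ be twice continuously differentiable, and write Δ for the spatial Laplacian Δf = Σ_{j=1}^d ∂²f/∂x_j² (applied componentwise to complex-valued functions). Suppose that for all (x,t): (i) z satisfies the nonlinear Schrödinger equation with wave operator, 2i ∂_t z + ε² ∂_tt z − Δz + 3λ|z|²z = 0; and (ii) r satisfies the remainder equation ε² ∂_tt r − Δr + ε⁻² r + f_r(z, r; t) = 0, where f_r(z,r;t) = λ(e^{3it/ε²} z³ + e^{−3it/ε²} z̄³) + 3λ(e^{2it/ε²} z² + e^{−2it/ε²} z̄²) r + 3λ(e^{it/ε²} z + e^{−it/ε²} z̄) r² + 6λ|z|² r + λ r³. Define u(x,t) = e^{it/ε²} z(x,t) + e^{−it/ε²} z̄(x,t) + r(x,t), which is real-valued. Then u satisfies the nonlinear Klein–Gordon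 equation ε² ∂_tt u − Δu + ε⁻² u + λ u³ = 0 for all (x,t). -/
open Complex

/-- Second time derivative of a complex-valued function of time. -/
noncomputable def timeDeriv2 (f : ℝ → ℂ) (t : ℝ) : ℂ :=
  deriv (fun τ => deriv f τ) t

/-- Spatial Laplacian `Δf(x) = ∑ⱼ ∂²f/∂xⱼ²` of a complex-valued function on
`ℝ^d`, computed via second derivatives along the coordinate directions. -/
noncomputable def spatialLaplacian {d : ℕ}
    (f : EuclideanSpace ℝ (Fin d) → ℂ) (x : EuclideanSpace ℝ (Fin d)) : ℂ :=
  ∑ j : Fin d,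
    deriv (fun s : ℝ =>
      deriv (fun s' : ℝ => f (x + s' • EuclideanSpace.single j (1 : ℝ))) s) 0

/-- The nonlinearity `f_r(z, r; t)` in the remainder equation of the multiscale
decomposition of the NKGE. -/
noncomputable def frNonlinearity (ε lam : ℝ) (zv : ℂ) (rv t : ℝ) : ℂ :=
  (lam : ℂ) * (Complex.exp (3 * I * (t : ℂ) / (ε : ℂ) ^ 2) * zv ^ 3
      + Complex.exp (-(3 * I * (t : ℂ) / (ε : ℂ) ^ 2)) * (starRingEnd ℂ zv) ^ 3)
    + 3 * (lam : ℂ) * (Complex.exp (2 * I * (t : ℂ) / (ε : ℂ) ^ 2) * zv ^ 2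
      + Complex.exp (-(2 * I * (t : ℂ) / (ε : ℂ) ^ 2)) * (starRingEnd ℂ zv) ^ 2) * (rv : ℂ)
    + 3 * (lam : ℂ) * (Complex.exp (I * (t : ℂ) / (ε : ℂ) ^ 2) * zv
      + Complex.exp (-(I * (t : ℂ) / (ε : ℂ) ^ 2)) * starRingEnd ℂ zv) * (rv : ℂ) ^ 2
    + 6 * (lam : ℂ) * (zv * starRingEnd ℂ zv) * (rv : ℂ) + (lam : ℂ) * (rv : ℂ) ^ 3

/-- The WKB reconstruction `u = e^{it/ε²} z + e^{-it/ε²} z̄ + r`. -/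
noncomputable def wkbReconstruction {d : ℕ} (ε : ℝ)
    (z : EuclideanSpace ℝ (Fin d) → ℝ → ℂ)
    (r : EuclideanSpace ℝ (Fin d) → ℝ → ℝ)
    (x : EuclideanSpace ℝ (Fin d)) (t : ℝ) : ℂ :=
  Complex.exp (I * (t : ℂ) / (ε : ℂ) ^ 2) * z x t
    + Complex.exp (-(I * (t : ℂ) / (ε : ℂ) ^ 2)) * starRingEnd ℂ (z x t)
    + (r x t : ℂ)

private lemma deriv_contDiff_one {f : ℝ → ℂ} (hf : ContDiff ℝ 2 f) :
    ContDiff ℝ 1 (deriv f) := by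
  rw [show (2 : WithTop ℕ∞) = 1 + 1 from by norm_num] at hf
  exact (contDiff_succ_iff_deriv.mp hf).2.2

private lemma hasDerivAt_cexp_cmul (c : ℂ) (s : ℝ) :
    HasDerivAt (fun τ : ℝ => Complex.exp (c * (τ : ℂ))) (c * Complex.exp (c * (s : ℂ))) s := by
  have h0 : HasDerivAt (fun τ : ℝ => c * (τ : ℂ)) c s := by
    simpa using (Complex.ofRealCLM.hasDerivAt (x := s)).const_mul c
  simpa [mul_comm] using h0.cexp

private lemma hasDerivAt_cexp_neg_cmul (c : ℂ) (s : ℝ) :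
    HasDerivAt (fun τ : ℝ => Complex.exp (-(c * (τ : ℂ)))) (-c * Complex.exp (-(c * (s : ℂ)))) s := by
  have h0 : HasDerivAt (fun τ : ℝ => -(c * (τ : ℂ))) (-c) s := by
    simpa [Pi.neg_def] using ((Complex.ofRealCLM.hasDerivAt (x := s)).const_mul c).neg
  simpa [mul_comm] using h0.cexp

private lemma second_deriv_mod (c : ℂ) {f h : ℝ → ℂ} (hf : ContDiff ℝ 2 f)
    (hh : ContDiff ℝ 2 h) (t : ℝ) :
    deriv (fun s => deriv (fun τ : ℝ => Complex.exp (c * (τ : ℂ)) * f τ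
        + Complex.exp (-(c * (τ : ℂ))) * (starRingEnd ℂ) (f τ) + h τ) s) t
      = Complex.exp (c * (t : ℂ)) * (c ^ 2 * f t + 2 * c * deriv f t + deriv (deriv f) t)
        + Complex.exp (-(c * (t : ℂ))) * (c ^ 2 * (starRingEnd ℂ) (f t)
            - 2 * c * (starRingEnd ℂ) (deriv f t) + (starRingEnd ℂ) (deriv (deriv f) t))
        + deriv (deriv h) t := by
  have hfd : Differentiable ℝ f := hf.differentiable two_ne_zero
  have hf' : ContDiff ℝ 1 (deriv f) := deriv_contDiff_one hf
  have hf'd : Differentiable ℝ (deriv f) := hf'.differentiable one_ne_zero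
  have hhd : Differentiable ℝ h := hh.differentiable two_ne_zero
  have hh'd : Differentiable ℝ (deriv h) := (deriv_contDiff_one hh).differentiable one_ne_zero
  have hconj : ∀ s : ℝ, HasDerivAt (fun τ => (starRingEnd ℂ) (f τ))
      ((starRingEnd ℂ) (deriv f s)) s := fun s => (hfd s).hasDerivAt.star
  have hD1 : (fun s => deriv (fun τ : ℝ => Complex.exp (c * (τ : ℂ)) * f τ
        + Complex.exp (-(c * (τ : ℂ))) * (starRingEnd ℂ) (f τ) + h τ) s)
      = fun s : ℝ => Complex.exp (c * (s : ℂ)) * (c * f s + deriv f s)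
        + Complex.exp (-(c * (s : ℂ))) * (-c * (starRingEnd ℂ) (f s)
            + (starRingEnd ℂ) (deriv f s)) + deriv h s := by
    funext s
    have H := (((hasDerivAt_cexp_cmul c s).mul (hfd s).hasDerivAt).add
      ((hasDerivAt_cexp_neg_cmul c s).mul (hconj s))).add (hhd s).hasDerivAt
    exact H.deriv.trans (by ring)
  rw [hD1]
  have P1 : HasDerivAt (fun s : ℝ => c * f s + deriv f s)
      (c * deriv f t + deriv (deriv f) t) t :=
    ((hfd t).hasDerivAt.const_mul c).add (hf'd t).hasDerivAt
  have hconj' : ∀ s : ℝ, HasDerivAt (fun τ => (starRingEnd ℂ) (deriv f τ))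
      ((starRingEnd ℂ) (deriv (deriv f) s)) s := fun s => (hf'd s).hasDerivAt.star
  have P2 : HasDerivAt (fun s : ℝ => -c * (starRingEnd ℂ) (f s) + (starRingEnd ℂ) (deriv f s))
      (-c * (starRingEnd ℂ) (deriv f t) + (starRingEnd ℂ) (deriv (deriv f) t)) t :=
    ((hconj t).const_mul (-c)).add (hconj' t)
  have H := (((hasDerivAt_cexp_cmul c t).mul P1).add
      ((hasDerivAt_cexp_neg_cmul c t).mul P2)).add (hh'd t).hasDerivAt
  exact H.deriv.trans (by ring)

private lemma second_deriv_const_mod (a b : ℂ) {f h : ℝ → ℂ} (hf : ContDiff ℝ 2 f)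
    (hh : ContDiff ℝ 2 h) (t : ℝ) :
    deriv (fun s => deriv (fun τ : ℝ => a * f τ + b * (starRingEnd ℂ) (f τ) + h τ) s) t
      = a * deriv (deriv f) t + b * (starRingEnd ℂ) (deriv (deriv f) t)
        + deriv (deriv h) t := by
  have hfd : Differentiable ℝ f := hf.differentiable two_ne_zero
  have hf'd : Differentiable ℝ (deriv f) := (deriv_contDiff_one hf).differentiable one_ne_zero
  have hhd : Differentiable ℝ h := hh.differentiable two_ne_zero
  have hh'd : Differentiable ℝ (deriv h) := (deriv_contDiff_one hh).differentiable one_ne_zero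
  have hconj : ∀ s : ℝ, HasDerivAt (fun τ => (starRingEnd ℂ) (f τ))
      ((starRingEnd ℂ) (deriv f s)) s := fun s => (hfd s).hasDerivAt.star
  have hD1 : (fun s => deriv (fun τ : ℝ => a * f τ + b * (starRingEnd ℂ) (f τ) + h τ) s)
      = fun s => a * deriv f s + b * (starRingEnd ℂ) (deriv f s) + deriv h s := by
    funext s
    have H := (((hfd s).hasDerivAt.const_mul a).add ((hconj s).const_mul b)).add
      (hhd s).hasDerivAt
    exact H.deriv
  rw [hD1]
  have hconj' : HasDerivAt (fun τ => (starRingEnd ℂ) (deriv f τ))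
      ((starRingEnd ℂ) (deriv (deriv f) t)) t := (hf'd t).hasDerivAt.star
  have H := (((hf'd t).hasDerivAt.const_mul a).add (hconj'.const_mul b)).add
    (hh'd t).hasDerivAt
  exact H.deriv

/-- **Multiscale decomposition identity for the nonlinear Klein–Gordon equation.**
If the envelope `z` solves the nonlinear Schrödinger equation with wave operator
`2i ∂ₜz + ε² ∂ₜₜz - Δz + 3λ|z|²z = 0` and the remainder `r` solves
`ε² ∂ₜₜr - Δr + ε⁻² r + f_r(z, r; t) = 0`, then the reconstruction
`u = e^{it/ε²} z + e^{-it/ε²} z̄ + r` is real-valued and solves the NKGE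
`ε² ∂ₜₜu - Δu + ε⁻² u + λ u³ = 0`. -/
theorem multiscale_decomposition_NKGE {d : ℕ} (hd : 1 ≤ d)
    (ε lam : ℝ) (hε : 0 < ε)
    (z : EuclideanSpace ℝ (Fin d) → ℝ → ℂ)
    (r : EuclideanSpace ℝ (Fin d) → ℝ → ℝ)
    (hz : ContDiff ℝ 2 (fun p : EuclideanSpace ℝ (Fin d) × ℝ => z p.1 p.2))
    (hr : ContDiff ℝ 2 (fun p : EuclideanSpace ℝ (Fin d) × ℝ => r p.1 p.2))
    (hNLSW : ∀ (x : EuclideanSpace ℝ (Fin d)) (t : ℝ),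
      2 * I * deriv (fun τ => z x τ) t + (ε : ℂ) ^ 2 * timeDeriv2 (fun τ => z x τ) t
        - spatialLaplacian (fun y => z y t) x
        + 3 * (lam : ℂ) * (z x t * starRingEnd ℂ (z x t)) * z x t = 0)
    (hRem : ∀ (x : EuclideanSpace ℝ (Fin d)) (t : ℝ),
      (ε : ℂ) ^ 2 * timeDeriv2 (fun τ => (r x τ : ℂ)) t
        - spatialLaplacian (fun y => (r y t : ℂ)) x
        + ((ε : ℂ) ^ 2)⁻¹ * (r x t : ℂ)
        + frNonlinearity ε lam (z x t) (r x t) t = 0) :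
    ∀ (x : EuclideanSpace ℝ (Fin d)) (t : ℝ),
      (wkbReconstruction ε z r x t).im = 0 ∧
      (ε : ℂ) ^ 2 * timeDeriv2 (fun τ => wkbReconstruction ε z r x τ) t
        - spatialLaplacian (fun y => wkbReconstruction ε z r y t) x
        + ((ε : ℂ) ^ 2)⁻¹ * wkbReconstruction ε z r x t
        + (lam : ℂ) * (wkbReconstruction ε z r x t) ^ 3 = 0 := by
  intro x t
  have hrC : ContDiff ℝ 2 (fun p : EuclideanSpace ℝ (Fin d) × ℝ => ((r p.1 p.2 : ℝ) : ℂ)) :=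
    Complex.ofRealCLM.contDiff.comp hr
  -- conjugate exponential
  have hF : (starRingEnd ℂ) (Complex.exp (I * (t : ℂ) / (ε : ℂ) ^ 2))
      = Complex.exp (-(I * (t : ℂ) / (ε : ℂ) ^ 2)) := by
    rw [← Complex.exp_conj]
    congr 1
    simp only [map_div₀, map_mul, Complex.conj_I, Complex.conj_ofReal, map_pow]
    ring
  constructor
  · simp only [wkbReconstruction]
    rw [← hF, ← map_mul]
    simp only [Complex.add_im, Complex.conj_im, Complex.ofReal_im]
    ring
  -- PDE part
  · -- time derivative
    have hzx : ContDiff ℝ 2 (fun τ => z x τ) := hz.comp (contDiff_const.prodMk contDiff_id)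
    have hrx : ContDiff ℝ 2 (fun τ => ((r x τ : ℝ) : ℂ)) :=
      hrC.comp (contDiff_const.prodMk contDiff_id)
    have harg : ∀ τ : ℝ, I * (τ : ℂ) / (ε : ℂ) ^ 2 = I / (ε : ℂ) ^ 2 * (τ : ℂ) :=
      fun τ => by ring
    have hT : timeDeriv2 (fun τ => wkbReconstruction ε z r x τ) t
        = Complex.exp (I * (t : ℂ) / (ε : ℂ) ^ 2)
            * ((I / (ε : ℂ) ^ 2) ^ 2 * z x t
              + 2 * (I / (ε : ℂ) ^ 2) * deriv (fun τ => z x τ) t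
              + deriv (deriv (fun τ => z x τ)) t)
          + Complex.exp (-(I * (t : ℂ) / (ε : ℂ) ^ 2))
            * ((I / (ε : ℂ) ^ 2) ^ 2 * (starRingEnd ℂ) (z x t)
              - 2 * (I / (ε : ℂ) ^ 2) * (starRingEnd ℂ) (deriv (fun τ => z x τ) t)
              + (starRingEnd ℂ) (deriv (deriv (fun τ => z x τ)) t))
          + deriv (deriv (fun τ => ((r x τ : ℝ) : ℂ))) t := by
      have hfun : (fun τ : ℝ => wkbReconstruction ε z r x τ)
          = fun τ : ℝ => Complex.exp (I / (ε : ℂ) ^ 2 * (τ : ℂ)) * z x τ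
            + Complex.exp (-(I / (ε : ℂ) ^ 2 * (τ : ℂ))) * (starRingEnd ℂ) (z x τ)
            + ((r x τ : ℝ) : ℂ) := by
        funext τ
        simp only [wkbReconstruction, harg]
      rw [timeDeriv2, hfun, second_deriv_mod (I / (ε : ℂ) ^ 2) hzx hrx t, harg t]
    -- spatial laplacian
    have hslice : ∀ j : Fin d, ContDiff ℝ 2
        (fun s : ℝ => (x + s • EuclideanSpace.single j (1 : ℝ), t)) :=
      fun j => (contDiff_const.add (contDiff_id.smul contDiff_const)).prodMk contDiff_const
    have hLap : spatialLaplacian (fun y => wkbReconstruction ε z r y t) x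
        = Complex.exp (I * (t : ℂ) / (ε : ℂ) ^ 2) * spatialLaplacian (fun y => z y t) x
          + Complex.exp (-(I * (t : ℂ) / (ε : ℂ) ^ 2))
            * (starRingEnd ℂ) (spatialLaplacian (fun y => z y t) x)
          + spatialLaplacian (fun y => ((r y t : ℝ) : ℂ)) x := by
      simp only [spatialLaplacian, wkbReconstruction]
      rw [map_sum, Finset.mul_sum, Finset.mul_sum, ← Finset.sum_add_distrib,
        ← Finset.sum_add_distrib]
      refine Finset.sum_congr rfl fun j _ => ?_
      exact second_deriv_const_mod (Complex.exp (I * (t : ℂ) / (ε : ℂ) ^ 2))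
        (Complex.exp (-(I * (t : ℂ) / (ε : ℂ) ^ 2)))
        (hz.comp (hslice j)) (hrC.comp (hslice j)) 0
    -- exponential identities
    have hE2 : Complex.exp (2 * I * (t : ℂ) / (ε : ℂ) ^ 2)
        = Complex.exp (I * (t : ℂ) / (ε : ℂ) ^ 2) ^ 2 := by
      rw [show 2 * I * (t : ℂ) / (ε : ℂ) ^ 2
          = I * (t : ℂ) / (ε : ℂ) ^ 2 + I * (t : ℂ) / (ε : ℂ) ^ 2 from by ring,
        Complex.exp_add]
      ring
    have hE3 : Complex.exp (3 * I * (t : ℂ) / (ε : ℂ) ^ 2)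
        = Complex.exp (I * (t : ℂ) / (ε : ℂ) ^ 2) ^ 3 := by
      rw [show 3 * I * (t : ℂ) / (ε : ℂ) ^ 2
          = I * (t : ℂ) / (ε : ℂ) ^ 2 + (I * (t : ℂ) / (ε : ℂ) ^ 2
            + I * (t : ℂ) / (ε : ℂ) ^ 2) from by ring,
        Complex.exp_add, Complex.exp_add]
      ring
    have hE2' : Complex.exp (-(2 * I * (t : ℂ) / (ε : ℂ) ^ 2))
        = Complex.exp (-(I * (t : ℂ) / (ε : ℂ) ^ 2)) ^ 2 := by
      rw [show -(2 * I * (t : ℂ) / (ε : ℂ) ^ 2)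
          = -(I * (t : ℂ) / (ε : ℂ) ^ 2) + -(I * (t : ℂ) / (ε : ℂ) ^ 2) from by ring,
        Complex.exp_add]
      ring
    have hE3' : Complex.exp (-(3 * I * (t : ℂ) / (ε : ℂ) ^ 2))
        = Complex.exp (-(I * (t : ℂ) / (ε : ℂ) ^ 2)) ^ 3 := by
      rw [show -(3 * I * (t : ℂ) / (ε : ℂ) ^ 2)
          = -(I * (t : ℂ) / (ε : ℂ) ^ 2) + (-(I * (t : ℂ) / (ε : ℂ) ^ 2)
            + -(I * (t : ℂ) / (ε : ℂ) ^ 2)) from by ring,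
        Complex.exp_add, Complex.exp_add]
      ring
    have hEF : Complex.exp (I * (t : ℂ) / (ε : ℂ) ^ 2)
        * Complex.exp (-(I * (t : ℂ) / (ε : ℂ) ^ 2)) = 1 := by
      rw [← Complex.exp_add]
      simp
    have hsq : (ε : ℂ) ^ 2 * ((ε : ℂ) ^ 2)⁻¹ = 1 := by
      have : (ε : ℂ) ≠ 0 := by exact_mod_cast hε.ne'
      field_simp
    have hA := hNLSW x t
    have hA' := congrArg (starRingEnd ℂ) (hNLSW x t)
    simp only [timeDeriv2] at hA hA'
    simp only [map_add, map_sub, map_mul, map_zero, map_ofNat, Complex.conj_I,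
      Complex.conj_ofReal, map_pow, RingHomCompTriple.comp_apply, RingHom.id_apply] at hA'
    have hB := hRem x t
    simp only [timeDeriv2, frNonlinearity, hE2, hE3, hE2', hE3'] at hB
    rw [hT, hLap]
    simp only [wkbReconstruction, timeDeriv2]
    linear_combination
      Complex.exp (I * (t : ℂ) / (ε : ℂ) ^ 2) * hA
      + Complex.exp (-(I * (t : ℂ) / (ε : ℂ) ^ 2)) * hA'
      + hB
      + (Complex.exp (I * (t : ℂ) / (ε : ℂ) ^ 2)
          * (I ^ 2 * ((ε : ℂ) ^ 2)⁻¹ * z x t + 2 * I * deriv (fun τ => z x τ) t)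
        + Complex.exp (-(I * (t : ℂ) / (ε : ℂ) ^ 2))
          * (I ^ 2 * ((ε : ℂ) ^ 2)⁻¹ * (starRingEnd ℂ) (z x t)
            - 2 * I * (starRingEnd ℂ) (deriv (fun τ => z x τ) t))) * hsq
      + (((ε : ℂ) ^ 2)⁻¹ * z x t * Complex.exp (I * (t : ℂ) / (ε : ℂ) ^ 2)
        + ((ε : ℂ) ^ 2)⁻¹ * (starRingEnd ℂ) (z x t)
          * Complex.exp (-(I * (t : ℂ) / (ε : ℂ) ^ 2))) * Complex.I_sq
      + (3 * (lam : ℂ) * (z x t) ^ 2 * (starRingEnd ℂ) (z x t)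
          * Complex.exp (I * (t : ℂ) / (ε : ℂ) ^ 2)
        + 3 * (lam : ℂ) * z x t * ((starRingEnd ℂ) (z x t)) ^ 2
          * Complex.exp (-(I * (t : ℂ) / (ε : ℂ) ^ 2))
        + 6 * (lam : ℂ) * z x t * (starRingEnd ℂ) (z x t) * ((r x t : ℝ) : ℂ)) * hEF
end
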